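/- Let (X,G) be a Cantor dynamical system whose full group has many involutions, V a regular open set, and γ ∈ [G] with spr(γ) ⊄ X \ closure(V). Then there exists a clopen set W ⊆ {x : γ(x) ≠ x} ∩ V with γ(W) ∩ W = ∅, and an involution ρ ∈ [G] with spr(ρ) ⊆ W such that ργ ≠ γρ. -/

import Mathlib

open Set

variable {X : Type*} [TopologicalSpace X]

noncomputable instance Homeomorph.instGroup_of_file : Group (X ≃ₜ X) where
  mul f g := g.trans f
  one := Homeomorph.refl X
  inv := Homeomorph.symm
  mul_assoc _ _ _ := Homeomorph.ext fun _ => rfl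
  one_mul _ := Homeomorph.ext fun _ => rfl
  mul_one _ := Homeomorph.ext fun _ => rfl
  inv_mul_cancel f := Homeomorph.ext fun x => f.symm_apply_apply x

@[simp] theorem Homeomorph.mul_apply' (f g : X ≃ₜ X) (x : X) : (f * g) x = f (g x) := rfl
@[simp] theorem Homeomorph.one_apply' (x : X) : (1 : X ≃ₜ X) x = x := rfl

/-- The support of a homeomorphism. -/
def spr (γ : X ≃ₜ X) : Set X := interior (closure {x | γ x ≠ x})

/-- The orbit of a point under a subgroup of homeomorphisms. -/
def orbitOf (G : Subgroup (X ≃ₜ X)) (x : X) : Set X := {y | ∃ g ∈ G, (g : X ≃ₜ X) x = y}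

/-- The full group of a Cantor dynamical system. -/
def fullGroup (G : Subgroup (X ≃ₜ X)) : Subgroup (X ≃ₜ X) where
  carrier := {γ | ∀ x, γ x ∈ orbitOf G x}
  one_mem' x := ⟨1, G.one_mem, rfl⟩
  mul_mem' {a b} ha hb x := by
    obtain ⟨h, hh, hbx⟩ := hb x
    obtain ⟨g, hg, hax⟩ := ha (b x)
    exact ⟨g * h, G.mul_mem hg hh, by simp only [Homeomorph.mul_apply'] at *; rw [hbx, hax]⟩
  inv_mem' {a} ha := by
    intro x
    obtain ⟨g, hg, hax⟩ := ha (a⁻¹ x)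
    refine ⟨g⁻¹, G.inv_mem hg, ?_⟩
    have : a (a⁻¹ x) = x := a.apply_symm_apply x
    rw [this] at hax
    have : (g⁻¹ : X ≃ₜ X) (g (a⁻¹ x)) = a⁻¹ x := g.symm_apply_apply _
    rw [hax] at this
    exact this

/-!
Since `spr γ` is open and meets `closure V`, some point `x ∈ V` is moved by `γ`. Separating `x`
from `γ x` and using that clopen sets form a basis, we get a clopen neighbourhood `W` of `x` in
`V ∩ {γ ≠ id}` with `γ '' W` disjoint from `W`. Being clopen, `W` is regular open, so it carries a
nontrivial involution `ρ`. A point `y` moved by `ρ` lies in `W`, so `γ y ∉ W` is fixed by `ρ`; if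
`ρ` commuted with `γ` then `γ (ρ y) = ρ (γ y) = γ y`, forcing `ρ y = y`.
-/

theorem exists_apply_ne_mem_of_not_spr_subset {γ : X ≃ₜ X} {V : Set X} (hV : IsOpen V)
    (h : ¬ spr γ ⊆ (closure V)ᶜ) : ∃ x ∈ V, γ x ≠ x := by
  obtain ⟨x₀, hx₀spr, hx₀V⟩ := not_subset.mp h
  obtain ⟨y, hyspr, hyV⟩ : (spr γ ∩ V).Nonempty :=
    mem_closure_iff.mp (not_not.mp hx₀V) _ isOpen_interior hx₀spr
  obtain ⟨x, hxV, hmoved⟩ := mem_closure_iff.mp (interior_subset hyspr) V hV hyV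
  exact ⟨x, hxV, hmoved⟩

section Support

variable [T2Space X]

theorem setOf_apply_ne_subset_spr (γ : X ≃ₜ X) : {x | γ x ≠ x} ⊆ spr γ :=
  interior_maximal subset_closure (isOpen_ne_fun γ.continuous continuous_id)

theorem apply_eq_of_spr_subset {ρ : X ≃ₜ X} {W : Set X} (hρ : spr ρ ⊆ W) {y : X}
    (hy : y ∉ W) : ρ y = y :=
  not_not.mp fun hmoved => hy (hρ (setOf_apply_ne_subset_spr ρ hmoved))

theorem mul_ne_mul_of_spr_subset {ρ γ : X ≃ₜ X} {W : Set X} (hρ : ρ ≠ 1) (hρW : spr ρ ⊆ W)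
    (hγW : Disjoint (γ '' W) W) : ρ * γ ≠ γ * ρ := by
  obtain ⟨y, hy⟩ : ∃ y, ρ y ≠ y := by
    by_contra! hfix
    exact hρ (Homeomorph.ext hfix)
  have hyW : y ∈ W := hρW (setOf_apply_ne_subset_spr ρ hy)
  have hγy : ρ (γ y) = γ y :=
    apply_eq_of_spr_subset hρW (hγW.notMem_of_mem_left (mem_image_of_mem γ hyW))
  intro hcomm
  have := DFunLike.congr_fun hcomm y
  rw [Homeomorph.mul_apply', Homeomorph.mul_apply', hγy] at this
  exact hy (γ.injective this).symm

end Support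

theorem exists_isClopen_disjoint_image [T2Space X] [CompactSpace X] [TotallyDisconnectedSpace X]
    {f : X → X} (hf : Continuous f) {x : X} (hx : f x ≠ x) {U : Set X} (hU : IsOpen U)
    (hxU : x ∈ U) : ∃ W, IsClopen W ∧ x ∈ W ∧ W ⊆ U ∧ Disjoint (f '' W) W := by
  obtain ⟨A, B, hA, hB, hfxA, hxB, hAB⟩ := t2_separation hx
  obtain ⟨W, hWclopen, hxW, hWsub⟩ := compact_exists_isClopen_in_isOpen
    ((hU.inter hB).inter (hA.preimage hf)) ⟨⟨hxU, hxB⟩, hfxA⟩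
  exact ⟨W, hWclopen, hxW, fun y hy => (hWsub hy).1.1,
    hAB.mono (image_subset_iff.mpr fun y hy => (hWsub hy).2) fun y hy => (hWsub hy).1.2⟩

theorem exists_noncommuting_involution_general {X : Type*} [TopologicalSpace X] [CompactSpace X] [TopologicalSpace.MetrizableSpace X] [TotallyDisconnectedSpace X]
    (G : Subgroup (X ≃ₜ X)) (hmi : ∀ A : Set X, A = interior (closure A) → A.Nonempty → ∃ π ∈ fullGroup G, π * π = 1 ∧ π ≠ 1 ∧ spr π ⊆ A)
    (V : Set X) (hV : V = interior (closure V))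
    (γ : X ≃ₜ X) (h : ¬ spr γ ⊆ (closure V)ᶜ) :
    ∃ W : Set X, IsClopen W ∧ W ⊆ {x | γ x ≠ x} ∩ V ∧ ⇑γ '' W ∩ W = ∅ ∧
      ∃ ρ ∈ fullGroup G, ρ * ρ = 1 ∧ spr ρ ⊆ W ∧ ρ * γ ≠ γ * ρ := by
  have hVopen : IsOpen V := hV ▸ isOpen_interior
  obtain ⟨x, hxV, hx⟩ := exists_apply_ne_mem_of_not_spr_subset hVopen h
  obtain ⟨W, hWclopen, hxW, hWsub, hγW⟩ := exists_isClopen_disjoint_image γ.continuous hx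
    ((isOpen_ne_fun γ.continuous continuous_id).inter hVopen) ⟨hx, hxV⟩
  have hWreg : W = interior (closure W) := by
    rw [hWclopen.isClosed.closure_eq, hWclopen.isOpen.interior_eq]
  obtain ⟨ρ, hρG, hρ2, hρ1, hρW⟩ := hmi W hWreg ⟨x, hxW⟩
  exact ⟨W, hWclopen, hWsub, disjoint_iff_inter_eq_empty.mp hγW, ρ, hρG, hρ2, hρW,
    mul_ne_mul_of_spr_subset hρ1 hρW hγW⟩

/-- If `spr γ` is not contained in `X \\ closure V`, there is a clopen set `W` inside the moved
part of `V` and an involution supported there which does not commute with `γ`. -/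
theorem exists_noncommuting_involution {X : Type*} [TopologicalSpace X] [CompactSpace X] [TopologicalSpace.MetrizableSpace X] [TotallyDisconnectedSpace X] [PerfectSpace X] [Nonempty X]
    (G : Subgroup (X ≃ₜ X)) (hmi : ∀ A : Set X, A = interior (closure A) → A.Nonempty → ∃ π ∈ fullGroup G, π * π = 1 ∧ π ≠ 1 ∧ spr π ⊆ A)
    (V : Set X) (hV : V = interior (closure V))
    (γ : X ≃ₜ X) (hγ : γ ∈ fullGroup G) (h : ¬ spr γ ⊆ (closure V)ᶜ) :
    ∃ W : Set X, IsClopen W ∧ W ⊆ {x | γ x ≠ x} ∩ V ∧ ⇑γ '' W ∩ W = ∅ ∧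
      ∃ ρ ∈ fullGroup G, ρ * ρ = 1 ∧ spr ρ ⊆ W ∧ ρ * γ ≠ γ * ρ :=
  exists_noncommuting_involution_general G hmi V hV γ h
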